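/- Let F : ℝ² → ℝ be continuously differentiable, let μ > 0 and η > 0, and assume: (i) 0 < μ·F(w) ≤ ∇F(w)·w for all w ≠ 0, and (ii) the limit inferior of F(w)/|w|^μ as w → 0 (w ≠ 0) is at least η. Then F(w) ≥ η·|w|^μ for all w ∈ ℝ². -/

import Mathlib

/-!
Along a ray `t ↦ t • w`, the Ambrosetti–Rabinowitz inequality `μ F(v) ≤ F'(v) v` says exactly
that `t ↦ F(t • w) / t ^ μ` is nondecreasing on `(0, ∞)`. Hence `F(w) / ‖w‖ ^ μ` dominates
`F(t • w) / ‖t • w‖ ^ μ` for every `t ∈ (0, 1]`, and letting `t → 0⁺` it dominates the liminf at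
the origin. At `w = 0` the claim is `0 ≤ F 0`, which follows from continuity since `F > 0` off `0`.
-/

open Filter Set Topology

section

variable {E : Type*} [NormedAddCommGroup E] [NormedSpace ℝ E] {F : E → ℝ} {μ : ℝ} {w : E}

theorem monotoneOn_apply_smul_mul_rpow_neg (hF : Differentiable ℝ F)
    (hAR : ∀ v, v ≠ 0 → μ * F v ≤ fderiv ℝ F v v) (hw : w ≠ 0) :
    MonotoneOn (fun t : ℝ => F (t • w) * t ^ (-μ)) (Ioi 0) := by
  have hderiv : ∀ t ∈ Ioi (0 : ℝ), HasDerivAt (fun t : ℝ => F (t • w) * t ^ (-μ))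
      (fderiv ℝ F (t • w) w * t ^ (-μ) + F (t • w) * (-μ * t ^ (-μ - 1))) t := by
    intro t ht
    have hray : HasDerivAt (fun s : ℝ => F (s • w)) (fderiv ℝ F (t • w) w) t := by
      have := (hF (t • w)).hasFDerivAt.comp_hasDerivAt t ((hasDerivAt_id t).smul_const w)
      rwa [one_smul] at this
    exact hray.mul (Real.hasDerivAt_rpow_const (Or.inl (ne_of_gt ht)))
  refine monotoneOn_of_hasDerivWithinAt_nonneg (convex_Ioi 0)
    (fun t ht => (hderiv t ht).continuousAt.continuousWithinAt)
    (fun t ht => (hderiv t (interior_subset ht)).hasDerivWithinAt) fun t ht => ?_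
  rw [interior_Ioi] at ht
  have hAR_t : μ * F (t • w) ≤ t * fderiv ℝ F (t • w) w := by
    simpa using hAR (t • w) (smul_ne_zero (ne_of_gt ht) hw)
  have hsplit : t ^ (-μ) = t * t ^ (-μ - 1) := by
    have := Real.rpow_add_one ht.ne' (-μ - 1)
    rw [sub_add_cancel] at this
    rw [this, mul_comm]
  have hfactor : fderiv ℝ F (t • w) w * t ^ (-μ) + F (t • w) * (-μ * t ^ (-μ - 1)) =
      t ^ (-μ - 1) * (t * fderiv ℝ F (t • w) w - μ * F (t • w)) := by
    rw [hsplit]; ring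
  rw [hfactor]
  exact mul_nonneg (Real.rpow_nonneg ht.le _) (sub_nonneg.2 hAR_t)

theorem apply_smul_le_rpow_mul (hF : Differentiable ℝ F)
    (hAR : ∀ v, v ≠ 0 → μ * F v ≤ fderiv ℝ F v v) (hw : w ≠ 0) {t : ℝ} (ht₀ : 0 < t)
    (ht₁ : t ≤ 1) : F (t • w) ≤ t ^ μ * F w := by
  have hmono := monotoneOn_apply_smul_mul_rpow_neg hF hAR hw ht₀ (mem_Ioi.2 one_pos) ht₁
  simp only [one_smul, Real.one_rpow, mul_one, Real.rpow_neg ht₀.le] at hmono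
  rwa [← div_eq_mul_inv, div_le_iff₀' (Real.rpow_pos_of_pos ht₀ μ)] at hmono

theorem apply_smul_div_norm_rpow_le (hF : Differentiable ℝ F)
    (hAR : ∀ v, v ≠ 0 → μ * F v ≤ fderiv ℝ F v v) (hw : w ≠ 0) {t : ℝ} (ht₀ : 0 < t)
    (ht₁ : t ≤ 1) : F (t • w) / ‖t • w‖ ^ μ ≤ F w / ‖w‖ ^ μ := by
  have htμ : 0 < t ^ μ := Real.rpow_pos_of_pos ht₀ μ
  rw [norm_smul, Real.norm_of_nonneg ht₀.le, Real.mul_rpow ht₀.le (norm_nonneg w),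
    ← div_div, div_le_div_iff_of_pos_right (Real.rpow_pos_of_pos (norm_pos_iff.2 hw) μ),
    div_le_iff₀' htμ]
  exact apply_smul_le_rpow_mul hF hAR hw ht₀ ht₁

theorem tendsto_smul_nhdsGT_zero_nhdsNE (hw : w ≠ 0) :
    Tendsto (fun t : ℝ => t • w) (𝓝[>] 0) (𝓝[≠] 0) := by
  refine tendsto_nhdsWithin_of_tendsto_nhds_of_eventually_within _ ?_ ?_
  · exact ((continuous_id.smul continuous_const).tendsto' 0 0 (zero_smul ℝ w)).mono_left
      nhdsWithin_le_nhds
  · filter_upwards [self_mem_nhdsWithin] with t ht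
    exact smul_ne_zero (ne_of_gt ht) hw

theorem liminf_div_norm_rpow_le (hF : Differentiable ℝ F)
    (hAR : ∀ v, v ≠ 0 → μ * F v ≤ fderiv ℝ F v v) (hF_nonneg : ∀ v, v ≠ 0 → 0 ≤ F v)
    (hw : w ≠ 0) : liminf (fun v => F v / ‖v‖ ^ μ) (𝓝[≠] 0) ≤ F w / ‖w‖ ^ μ := by
  have hray : ∀ᶠ t in 𝓝[>] (0 : ℝ), F (t • w) / ‖t • w‖ ^ μ ≤ F w / ‖w‖ ^ μ := by
    filter_upwards [Ioo_mem_nhdsGT one_pos] with t ht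
    exact apply_smul_div_norm_rpow_le hF hAR hw ht.1 ht.2.le
  refine liminf_le_of_frequently_le ((tendsto_smul_nhdsGT_zero_nhdsNE hw).frequently
    hray.frequently) (isBoundedUnder_of_eventually_ge (a := 0) ?_)
  filter_upwards [self_mem_nhdsWithin] with v hv
  exact div_nonneg (hF_nonneg v hv) (Real.rpow_nonneg (norm_nonneg v) μ)

end

theorem stmt5_general (F : EuclideanSpace ℝ (Fin 2) → ℝ) (hF : ContDiff ℝ 1 F)
    (μ η : ℝ) (hμ : 0 < μ)
    (hAR : ∀ w : EuclideanSpace ℝ (Fin 2), w ≠ 0 →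
      0 < μ * F w ∧ μ * F w ≤ fderiv ℝ F w w)
    (hliminf : η ≤ Filter.liminf (fun w : EuclideanSpace ℝ (Fin 2) => F w / ‖w‖ ^ μ)
      (nhdsWithin 0 {w : EuclideanSpace ℝ (Fin 2) | w ≠ 0})) :
    ∀ w : EuclideanSpace ℝ (Fin 2), η * ‖w‖ ^ μ ≤ F w := by
  have hF_pos : ∀ v, v ≠ 0 → 0 < F v := fun v hv => pos_of_mul_pos_right (hAR v hv).1 hμ.le
  intro w
  rcases eq_or_ne w 0 with rfl | hw
  · rw [norm_zero, Real.zero_rpow hμ.ne', mul_zero]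
    exact ge_of_tendsto (x := 𝓝[≠] 0)
      (hF.continuous.continuousAt.tendsto.mono_left nhdsWithin_le_nhds)
      (eventually_nhdsWithin_of_forall fun v hv => (hF_pos v hv).le)
  · rw [← le_div_iff₀ (Real.rpow_pos_of_pos (norm_pos_iff.2 hw) μ)]
    exact hliminf.trans (liminf_div_norm_rpow_le (hF.differentiable one_ne_zero)
      (fun v hv => (hAR v hv).2) (fun v hv => (hF_pos v hv).le) hw)

/-- If `F : ℝ² → ℝ` is `C¹`, `μ > 0`, `η > 0`, with
`0 < μ F(w) ≤ ∇F(w)·w` for all `w ≠ 0` and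
`liminf_{w → 0, w ≠ 0} F(w) / ‖w‖ ^ μ ≥ η`, then `F(w) ≥ η ‖w‖ ^ μ` for all `w`. -/
theorem stmt5 (F : EuclideanSpace ℝ (Fin 2) → ℝ) (hF : ContDiff ℝ 1 F)
    (μ η : ℝ) (hμ : 0 < μ) (hη : 0 < η)
    (hAR : ∀ w : EuclideanSpace ℝ (Fin 2), w ≠ 0 →
      0 < μ * F w ∧ μ * F w ≤ fderiv ℝ F w w)
    (hliminf : η ≤ Filter.liminf (fun w : EuclideanSpace ℝ (Fin 2) => F w / ‖w‖ ^ μ)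
      (nhdsWithin 0 {w : EuclideanSpace ℝ (Fin 2) | w ≠ 0})) :
    ∀ w : EuclideanSpace ℝ (Fin 2), η * ‖w‖ ^ μ ≤ F w :=
  stmt5_general F hF μ η hμ hAR hliminf
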